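/- Let μ be a Borel probability measure on ℝ with finite first moment. Let H0 and H1 be probability distributions on the extended reals ℝ ∪ {−∞, +∞} satisfying the monotone likelihood ratio property with H0 dominating (H0 ≽_lr H1), and for g ∈ {0,1} define the risk-decision curves d_g(u) := Pr(H_g ≤ u) (the CDF of H_g). Assume ∫ d_g dμ > 0 for g ∈ {0,1}. Then (∫ u·d_1(u) dμ(u)) / (∫ d_1(u) dμ(u)) ≤ (∫ u·d_0(u) dμ(u)) / (∫ d_0(u) dμ(u)). -/

import Mathlib

/-!
Write `f₀, f₁` for the densities of `H0, H1` with respect to `H0 + H1`. For `s ≤ t` the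
monotone ratio gives `f₀ s f₁ t ≤ f₁ s f₀ t`; integrating over `s ≤ x < t ≤ y` shows that the
CDFs `d₀, d₁` satisfy `d₀ x d₁ y ≤ d₁ x d₀ y` for `x ≤ y`. Hence
`(v - u) (d₁ u d₀ v - d₀ u d₁ v) ≥ 0` for all `u, v`, and integrating this against `μ ⊗ μ`
gives `(∫ u d₁) (∫ d₀) ≤ (∫ u d₀) (∫ d₁)`, which is the claim after clearing denominators.
-/

open MeasureTheory Set

/-- The monotone likelihood ratio property (MLRP) for two distributions `F0` and `F1`
on a linearly ordered measurable space, with `F0` dominating: the ratio of the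
Radon–Nikodym derivatives of `F0` and `F1` with respect to the sum measure `F0 + F1`
is non-decreasing `(F0 + F1)`-almost everywhere (with the convention, automatic in
`ℝ≥0∞`, that the ratio is `∞` where the density of `F1` vanishes but that of `F0`
does not). -/
def MLRP {α : Type*} [MeasurableSpace α] [LinearOrder α]
    (F0 F1 : Measure α) : Prop :=
  ∃ S : Set α, (F0 + F1) S = 0 ∧
    ∀ x, x ∉ S → ∀ y, y ∉ S → x ≤ y →
      F0.rnDeriv (F0 + F1) x / F1.rnDeriv (F0 + F1) x ≤
        F0.rnDeriv (F0 + F1) y / F1.rnDeriv (F0 + F1) y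

theorem ENNReal.mul_le_mul_of_div_le_div {a b c d : ENNReal} (h : a / b ≤ c / d)
    (hb : b ≠ ⊤) (hc : c ≠ ⊤) (hd : d ≠ ⊤) : a * d ≤ b * c := by
  rcases eq_or_ne d 0 with rfl | hd0
  · simp
  rcases eq_or_ne b 0 with rfl | hb0
  · rcases eq_or_ne a 0 with rfl | ha0
    · simp
    · have : c / d = ⊤ := top_le_iff.mp (by simpa [ENNReal.div_zero ha0] using h)
      exact absurd (ENNReal.div_eq_top.mp this) (by simp [hc, hd0])
  calc a * d = a / b * b * d := by rw [ENNReal.div_mul_cancel hb0 hb]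
    _ ≤ c / d * b * d := by gcongr
    _ = b * (c / d * d) := by ring
    _ = b * c := by rw [ENNReal.div_mul_cancel hd0 hd]

namespace MLRP

variable {α : Type*} [MeasurableSpace α] [LinearOrder α] {F0 F1 : Measure α}

theorem measure_mul_measure_le [SigmaFinite F0] [SigmaFinite F1] (h : MLRP F0 F1) {A B : Set α}
    (hAB : ∀ s ∈ A, ∀ t ∈ B, s ≤ t) : F0 A * F1 B ≤ F1 A * F0 B := by
  obtain ⟨S, hS, hmono⟩ := h
  -- Both sides are integrals over `A × B`, of `f0 s * f1 t` and of `f1 s * f0 t` respectively.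
  set ν := F0 + F1
  set f0 := F0.rnDeriv ν
  set f1 := F1.rnDeriv ν
  have hf0 : AEMeasurable f0 ν := (Measure.measurable_rnDeriv _ _).aemeasurable
  have hf1 : AEMeasurable f1 ν := (Measure.measurable_rnDeriv _ _).aemeasurable
  have hgood : ∀ᵐ t ∂ν, t ∉ S ∧ f0 t ≠ ⊤ ∧ f1 t ≠ ⊤ := by
    filter_upwards [measure_eq_zero_iff_ae_notMem.mp hS, Measure.rnDeriv_lt_top F0 ν,
      Measure.rnDeriv_lt_top F1 ν] with t hS h0 h1 using ⟨hS, h0.ne, h1.ne⟩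
  have hF0 : ∀ s, F0 s = ∫⁻ t in s, f0 t ∂ν := fun s =>
    (Measure.setLIntegral_rnDeriv
      (Measure.absolutelyContinuous_of_le (Measure.le_add_right le_rfl)) s).symm
  have hF1 : ∀ s, F1 s = ∫⁻ t in s, f1 t ∂ν := fun s =>
    (Measure.setLIntegral_rnDeriv
      (Measure.absolutelyContinuous_of_le (Measure.le_add_left le_rfl)) s).symm
  rw [hF0, hF1, hF0, hF1, ← lintegral_mul_const'' _ hf0.restrict,
    ← lintegral_mul_const'' _ hf1.restrict]
  refine setLIntegral_mono_ae (hf1.restrict.mul_const _) ?_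
  filter_upwards [hgood] with s hs hsA
  obtain ⟨hsS, -, hs1⟩ := hs
  rw [← lintegral_const_mul'' _ hf1.restrict, ← lintegral_const_mul'' _ hf0.restrict]
  refine setLIntegral_mono_ae (hf0.restrict.const_mul _) ?_
  filter_upwards [hgood] with t ht htB
  obtain ⟨htS, ht0, ht1⟩ := ht
  exact ENNReal.mul_le_mul_of_div_le_div (hmono s hsS t htS (hAB s hsA t htB)) hs1 ht0 ht1

theorem measure_Iic_mul_measure_Iic_le [SigmaFinite F0] [SigmaFinite F1]
    [TopologicalSpace α] [OrderClosedTopology α] [OpensMeasurableSpace α] (h : MLRP F0 F1)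
    {x y : α} (hxy : x ≤ y) :
    F0 (Iic x) * F1 (Iic y) ≤ F1 (Iic x) * F0 (Iic y) := by
  have hsplit : ∀ F : Measure α, F (Iic y) = F (Iic x) + F (Ioc x y) := fun F => by
    rw [← Iic_union_Ioc_eq_Iic hxy, measure_union (Iic_disjoint_Ioc le_rfl) measurableSet_Ioc]
  have key := h.measure_mul_measure_le (A := Iic x) (B := Ioc x y)
    fun s hs t ht => hs.trans ht.1.le
  rw [hsplit F0, hsplit F1, mul_add, mul_add, mul_comm (F0 (Iic x))]
  gcongr

theorem measureReal_Iic_mul_measureReal_Iic_le [IsFiniteMeasure F0] [IsFiniteMeasure F1]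
    [TopologicalSpace α] [OrderClosedTopology α] [OpensMeasurableSpace α] (h : MLRP F0 F1)
    {x y : α} (hxy : x ≤ y) :
    F0.real (Iic x) * F1.real (Iic y) ≤ F1.real (Iic x) * F0.real (Iic y) := by
  simp only [measureReal_def, ← ENNReal.toReal_mul]
  exact ENNReal.toReal_mono (by finiteness) (h.measure_Iic_mul_measure_Iic_le hxy)

end MLRP

theorem integral_mul_integral_le_of_monotone {α : Type*} [MeasurableSpace α] [LinearOrder α]
    {μ : Measure α} [SFinite μ] {g p q : α → ℝ} (hg : Monotone g)
    (hpq : ∀ u v, u ≤ v → p u * q v ≤ q u * p v)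
    (hp : Integrable p μ) (hq : Integrable q μ)
    (hgp : Integrable (fun u => g u * p u) μ) (hgq : Integrable (fun u => g u * q u) μ) :
    (∫ u, g u * q u ∂μ) * (∫ u, p u ∂μ) ≤ (∫ u, g u * p u ∂μ) * (∫ u, q u ∂μ) := by
  have hsymm : ∀ u v,
      g u * q u * p v + p u * (g v * q v) ≤ g u * p u * q v + q u * (g v * p v) := by
    intro u v
    rcases le_total u v with huv | hvu
    · nlinarith [mul_nonneg (sub_nonneg.2 (hg huv)) (sub_nonneg.2 (hpq u v huv))]
    · nlinarith [mul_nonneg (sub_nonneg.2 (hg hvu)) (sub_nonneg.2 (hpq v u hvu))]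
  have hint : ∫ z, (g z.1 * q z.1 * p z.2 + p z.1 * (g z.2 * q z.2)) ∂μ.prod μ ≤
      ∫ z, (g z.1 * p z.1 * q z.2 + q z.1 * (g z.2 * p z.2)) ∂μ.prod μ :=
    integral_mono ((hgq.mul_prod hp).add (hp.mul_prod hgq))
      ((hgp.mul_prod hq).add (hq.mul_prod hgp)) fun z => hsymm z.1 z.2
  rw [integral_add (hgq.mul_prod hp) (hp.mul_prod hgq),
    integral_add (hgp.mul_prod hq) (hq.mul_prod hgp), integral_prod_mul (fun u => g u * q u) p,
    integral_prod_mul p (fun u => g u * q u), integral_prod_mul (fun u => g u * p u) q,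
    integral_prod_mul q (fun u => g u * p u)] at hint
  linarith

theorem integrable_measureReal_Iic_comp {α : Type*} [MeasurableSpace α] [Preorder α]
    (μ : Measure ℝ) [IsFiniteMeasure μ] (H : Measure α) [IsProbabilityMeasure H] {f : ℝ → α}
    (hf : Monotone f) : Integrable (fun u => H.real (Iic (f u))) μ :=
  Integrable.of_mem_Icc 0 1
    (Monotone.measurable fun _ _ huv => measureReal_mono (Iic_subset_Iic.2 (hf huv))).aemeasurable
    (ae_of_all _ fun _ => ⟨measureReal_nonneg, measureReal_le_one⟩)

/-- **Second key inequality in Case 2 of the proof of Theorem 1.**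
Let `μ` be a Borel probability measure on `ℝ` with finite first moment, and let
`H0, H1` be probability distributions on the extended reals satisfying the MLRP with
`H0` dominating.  Define the risk-decision curves `d_g(u) := Pr(H_g ≤ u)` (the CDFs of
the `H_g`), and assume both decision rates `∫ d_g dμ` are positive.  Then switching from
the dominated curve `d1` to the dominating curve `d0` can only increase the outcome
rate: `(∫ u·d1(u) dμ) / (∫ d1 dμ) ≤ (∫ u·d0(u) dμ) / (∫ d0 dμ)`. -/
theorem outcome_rate_le_of_mlrp_decision_curves
    (μ : Measure ℝ) [IsProbabilityMeasure μ] (hμ : Integrable id μ)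
    (H0 H1 : Measure EReal) [IsProbabilityMeasure H0] [IsProbabilityMeasure H1]
    (hmlrp : MLRP H0 H1)
    (d0 d1 : ℝ → ℝ)
    (hd0 : ∀ u : ℝ, d0 u = (H0 (Iic (u : EReal))).toReal)
    (hd1 : ∀ u : ℝ, d1 u = (H1 (Iic (u : EReal))).toReal)
    (h0 : 0 < ∫ u, d0 u ∂μ) (h1 : 0 < ∫ u, d1 u ∂μ) :
    (∫ u, u * d1 u ∂μ) / (∫ u, d1 u ∂μ) ≤ (∫ u, u * d0 u ∂μ) / (∫ u, d0 u ∂μ) := by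
  obtain rfl : d0 = fun u : ℝ => H0.real (Iic (u : EReal)) := funext hd0
  obtain rfl : d1 = fun u : ℝ => H1.real (Iic (u : EReal)) := funext hd1
  have hd : ∀ (H : Measure EReal) [IsProbabilityMeasure H],
      Integrable (fun u : ℝ => H.real (Iic (u : EReal))) μ := fun H _ =>
    integrable_measureReal_Iic_comp μ H EReal.coe_strictMono.monotone
  have hud : ∀ (H : Measure EReal) [IsProbabilityMeasure H],
      Integrable (fun u : ℝ => u * H.real (Iic (u : EReal))) μ := fun H _ =>
    hμ.mul_bdd (hd H).aestronglyMeasurable (c := 1)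
      (ae_of_all _ fun _ => by simp [abs_of_nonneg measureReal_nonneg])
  rw [div_le_div_iff₀ h1 h0]
  exact integral_mul_integral_le_of_monotone monotone_id
    (fun u v huv => hmlrp.measureReal_Iic_mul_measureReal_Iic_le (EReal.coe_le_coe_iff.2 huv))
    (hd H0) (hd H1) (hud H0) (hud H1)
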